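/- arXiv:1611.03998 — 9 statements merged into one kernel-verified Lean document; each statement's English description precedes it below -/
import Mathlib

section
/- Let p, q be unit quaternions and let Z = (U, V) be a tangent vector to S³×S³ at (p,q), i.e. ⟨U,p⟩ = 0 and ⟨V,q⟩ = 0. Then JZ = (1/√3)(2pq⁻¹V − U, −2qp⁻¹U + V) is again a tangent vector to S³×S³ at (p,q), and J(JZ) = −Z. -/
noncomputable section

open Quaternion

/-- Euclidean inner product on the quaternions: `⟨x,y⟩ = Re (x * star y)`. -/
def ipQ (x y : ℍ[ℝ]) : ℝ := (x * star y).re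

/-- Euclidean inner product on pairs of quaternions. -/
def ip2Q (Z W : ℍ[ℝ] × ℍ[ℝ]) : ℝ := ipQ Z.1 W.1 + ipQ Z.2 W.2

/-- The almost complex structure `J` of the nearly Kähler `S³ × S³` at `(p,q)`:
`J(U,V) = (1/√3)(2pq⁻¹V − U, −2qp⁻¹U + V)`. -/
def Jmap (p q : ℍ[ℝ]) (Z : ℍ[ℝ] × ℍ[ℝ]) : ℍ[ℝ] × ℍ[ℝ] :=
  ((Real.sqrt 3)⁻¹ • ((2 : ℝ) • (p * q⁻¹ * Z.2) - Z.1),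
   (Real.sqrt 3)⁻¹ • (-((2 : ℝ) • (q * p⁻¹ * Z.1)) + Z.2))

/-- The nearly Kähler metric `g(Z,Z') = ½(⟨Z,Z'⟩ + ⟨JZ,JZ'⟩)`. -/
def gmet (p q : ℍ[ℝ]) (Z W : ℍ[ℝ] × ℍ[ℝ]) : ℝ :=
  (1 / 2) * (ip2Q Z W + ip2Q (Jmap p q Z) (Jmap p q W))

/-- The almost product structure `P(U,V) = (pq⁻¹V, qp⁻¹U)`. -/
def Pmap (p q : ℍ[ℝ]) (Z : ℍ[ℝ] × ℍ[ℝ]) : ℍ[ℝ] × ℍ[ℝ] :=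
  (p * q⁻¹ * Z.2, q * p⁻¹ * Z.1)

/-- The usual product structure `Q(U,V) = (−U, V)`. -/
def Qmap (Z : ℍ[ℝ] × ℍ[ℝ]) : ℍ[ℝ] × ℍ[ℝ] := (-Z.1, Z.2)

/-- Cross product of (imaginary) quaternions: `α × β = ½(αβ − βα)`. -/
def crossQ (a b : ℍ[ℝ]) : ℍ[ℝ] := (1 / 2 : ℝ) • (a * b - b * a)

/-- The tensor `G = ∇̃J` at `(p,q)`, evaluated on tangent vectors `X = (pα, qβ)`,
`Y = (pγ, qδ)` (so `α = p⁻¹X₁`, etc.):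
`G(X,Y) = (2/(3√3))(p(β×γ + α×δ + α×γ − 2β×δ), q(−α×δ − β×γ + 2α×γ − β×δ))`. -/
def Gmap (p q : ℍ[ℝ]) (X Y : ℍ[ℝ] × ℍ[ℝ]) : ℍ[ℝ] × ℍ[ℝ] :=
  (2 / (3 * Real.sqrt 3) : ℝ) •
    ((p * (crossQ (q⁻¹ * X.2) (p⁻¹ * Y.1) + crossQ (p⁻¹ * X.1) (q⁻¹ * Y.2)
        + crossQ (p⁻¹ * X.1) (p⁻¹ * Y.1) - (2 : ℝ) • crossQ (q⁻¹ * X.2) (q⁻¹ * Y.2)),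
      q * (-(crossQ (p⁻¹ * X.1) (q⁻¹ * Y.2)) - crossQ (q⁻¹ * X.2) (p⁻¹ * Y.1)
        + (2 : ℝ) • crossQ (p⁻¹ * X.1) (p⁻¹ * Y.1) - crossQ (q⁻¹ * X.2) (q⁻¹ * Y.2))))

/-! Left multiplication by `p q⁻¹` carries tangent vectors at `q` to tangent vectors at `p`: by
cyclicity of the real part, `⟨p q⁻¹ V, p⟩ = ‖p‖² Re (q⁻¹ V)`, a multiple of `⟨V, q⟩`. For `J² = -1`,
the maps `V ↦ p q⁻¹ V` and `U ↦ q p⁻¹ U` are mutually inverse, so in each component of `J (J Z)`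
the cross terms cancel and what is left is `(1 - 4) / 3` times the component of `Z`. -/

open scoped RealInnerProductSpace

namespace Quaternion

lemma re_mul_comm (a b : ℍ[ℝ]) : (a * b).re = (b * a).re := by
  simp only [re_mul]; ring

end Quaternion

lemma ipQ_eq_inner (x y : ℍ[ℝ]) : ipQ x y = ⟪x, y⟫ := rfl

lemma ipQ_mul_inv_mul_eq_zero {p q V : ℍ[ℝ]} (hV : ipQ V q = 0) :
    ipQ (p * q⁻¹ * V) p = 0 := by
  have hV' : (star q * V).re = 0 := by rw [Quaternion.re_mul_comm]; exact hV
  unfold ipQ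
  rw [Quaternion.re_mul_comm, ← mul_assoc, ← mul_assoc, Quaternion.star_mul_self,
    Quaternion.inv_def, mul_assoc, smul_mul_assoc]
  simp [hV']

section Jmap

variable {p q : ℍ[ℝ]} {Z : ℍ[ℝ] × ℍ[ℝ]}

lemma ipQ_Jmap_fst (hU : ipQ Z.1 p = 0) (hV : ipQ Z.2 q = 0) : ipQ (Jmap p q Z).1 p = 0 := by
  have hV' := ipQ_mul_inv_mul_eq_zero (p := p) hV
  simp only [ipQ_eq_inner] at *
  simp [Jmap, inner_smul_left, inner_sub_left, hU, hV']

lemma ipQ_Jmap_snd (hU : ipQ Z.1 p = 0) (hV : ipQ Z.2 q = 0) : ipQ (Jmap p q Z).2 q = 0 := by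
  have hU' := ipQ_mul_inv_mul_eq_zero (p := q) hU
  simp only [ipQ_eq_inner] at *
  simp [Jmap, inner_smul_left, inner_add_left, inner_neg_left, hU', hV]

lemma mul_inv_mul_mul_inv_mul (hp : p ≠ 0) (hq : q ≠ 0) (x : ℍ[ℝ]) :
    p * q⁻¹ * (q * p⁻¹ * x) = x := by
  simp only [mul_assoc, inv_mul_cancel_left₀ hq, mul_inv_cancel_left₀ hp]

theorem Jmap_Jmap (hp : p ≠ 0) (hq : q ≠ 0) : Jmap p q (Jmap p q Z) = -Z := by
  have h3 : Real.sqrt 3 ^ 2 = 3 := Real.sq_sqrt (by norm_num)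
  refine Prod.ext ?_ ?_ <;>
    simp only [Jmap, mul_add, mul_sub, mul_neg, mul_smul_comm, mul_inv_mul_mul_inv_mul hp hq,
      mul_inv_mul_mul_inv_mul hq hp, smul_add, smul_neg, smul_sub, smul_smul, Prod.fst_neg,
      Prod.snd_neg] <;>
    match_scalars <;> field_simp <;> linarith

end Jmap

/-- `JZ` is again tangent to `S³ × S³` at `(p,q)` and `J(JZ) = −Z`. -/
theorem stmt0 (p q : ℍ[ℝ]) (hp : ‖p‖ = 1) (hq : ‖q‖ = 1)
    (Z : ℍ[ℝ] × ℍ[ℝ]) (hZ1 : ipQ Z.1 p = 0) (hZ2 : ipQ Z.2 q = 0) :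
    ipQ (Jmap p q Z).1 p = 0 ∧ ipQ (Jmap p q Z).2 q = 0 ∧
      Jmap p q (Jmap p q Z) = -Z := by
  have hp0 : p ≠ 0 := norm_ne_zero_iff.mp (hp ▸ one_ne_zero)
  have hq0 : q ≠ 0 := norm_ne_zero_iff.mp (hq ▸ one_ne_zero)
  exact ⟨ipQ_Jmap_fst hZ1 hZ2, ipQ_Jmap_snd hZ1 hZ2, Jmap_Jmap hp0 hq0⟩
end
end

section
/- Let p, q be unit quaternions and let Z, Z′ be tangent vectors to S³×S³ at (p,q). Then: (i) P(PZ) = Z; (ii) P(JZ) = −J(PZ); (iii) g(PZ, PZ′) = g(Z, Z′); (iv) g(PZ, Z′) = g(Z, PZ′). -/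
noncomputable section

open Quaternion

/-! With `a = pq⁻¹` one has `qp⁻¹ = a⁻¹`, so `P(U,V) = (aV, a⁻¹U)` and
`J(U,V) = (1/√3)(2aV − U, −2a⁻¹U + V)`; (i) and (ii) are then formal. When `|p| = |q|`, `a` is a
unit quaternion, so left multiplication by `a` and by `a⁻¹` is orthogonal and `P` is an isometry
of `⟨·,·⟩`. Since `JP = −PJ`, `P` is then also an isometry of `⟨J·,J·⟩`, hence of `g`, which is
(iii); (iv) is (iii) applied to `(Z, PZ')` together with `P² = 1`. -/

lemma ipQ_mul_left (a x y : ℍ[ℝ]) : ipQ (a * x) (a * y) = normSq a * ipQ x y := by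
  simp only [ipQ, normSq_def', re_mul, imI_mul, imJ_mul, imK_mul, re_star, imI_star, imJ_star,
    imK_star]
  ring

lemma ip2Q_neg_neg (Z W : ℍ[ℝ] × ℍ[ℝ]) : ip2Q (-Z) (-W) = ip2Q Z W := by
  simp [ip2Q, ipQ]

lemma mul_inv_inv_eq (p q : ℍ[ℝ]) : (p * q⁻¹)⁻¹ = q * p⁻¹ := by
  rw [mul_inv_rev, inv_inv]

section

variable {p q : ℍ[ℝ]}

lemma normSq_mul_inv_eq_one (hq : q ≠ 0) (hpq : ‖p‖ = ‖q‖) : normSq (p * q⁻¹) = 1 := by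
  rw [map_mul, normSq_inv, normSq_eq_norm_mul_self, normSq_eq_norm_mul_self, hpq,
    mul_inv_cancel₀ (by simpa using hq)]

lemma Pmap_Pmap (hp : p ≠ 0) (hq : q ≠ 0) (Z : ℍ[ℝ] × ℍ[ℝ]) : Pmap p q (Pmap p q Z) = Z := by
  have ha : p * q⁻¹ ≠ 0 := mul_ne_zero hp (inv_ne_zero hq)
  simp only [Pmap, ← mul_inv_inv_eq p q, mul_inv_cancel_left₀ ha, inv_mul_cancel_left₀ ha]

lemma Pmap_Jmap (hp : p ≠ 0) (hq : q ≠ 0) (Z : ℍ[ℝ] × ℍ[ℝ]) :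
    Pmap p q (Jmap p q Z) = -Jmap p q (Pmap p q Z) := by
  have ha : p * q⁻¹ ≠ 0 := mul_ne_zero hp (inv_ne_zero hq)
  simp only [Pmap, Jmap, ← mul_inv_inv_eq p q, mul_smul_comm, mul_add, mul_sub, mul_neg,
    mul_inv_cancel_left₀ ha, inv_mul_cancel_left₀ ha, Prod.neg_mk, smul_add, smul_sub, smul_neg]
  refine Prod.ext ?_ ?_ <;> dsimp only <;> abel

lemma ip2Q_Pmap_Pmap (hq : q ≠ 0) (hpq : ‖p‖ = ‖q‖) (Z W : ℍ[ℝ] × ℍ[ℝ]) :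
    ip2Q (Pmap p q Z) (Pmap p q W) = ip2Q Z W := by
  have ha := normSq_mul_inv_eq_one hq hpq
  have ha' : normSq (q * p⁻¹) = 1 := by rw [← mul_inv_inv_eq, normSq_inv, ha, inv_one]
  simp only [ip2Q, Pmap, ipQ_mul_left, ha, ha', one_mul, add_comm]

lemma gmet_Pmap_Pmap (hq : q ≠ 0) (hpq : ‖p‖ = ‖q‖) (Z W : ℍ[ℝ] × ℍ[ℝ]) :
    gmet p q (Pmap p q Z) (Pmap p q W) = gmet p q Z W := by
  have hp : p ≠ 0 := norm_ne_zero_iff.mp (hpq ▸ norm_ne_zero_iff.mpr hq)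
  have hJP (Z : ℍ[ℝ] × ℍ[ℝ]) : Jmap p q (Pmap p q Z) = -Pmap p q (Jmap p q Z) := by
    rw [Pmap_Jmap hp hq, neg_neg]
  rw [gmet, gmet, hJP, hJP, ip2Q_neg_neg, ip2Q_Pmap_Pmap hq hpq, ip2Q_Pmap_Pmap hq hpq]

lemma gmet_Pmap_left (hq : q ≠ 0) (hpq : ‖p‖ = ‖q‖) (Z W : ℍ[ℝ] × ℍ[ℝ]) :
    gmet p q (Pmap p q Z) W = gmet p q Z (Pmap p q W) := by
  have hp : p ≠ 0 := norm_ne_zero_iff.mp (hpq ▸ norm_ne_zero_iff.mpr hq)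
  conv_lhs => rw [← Pmap_Pmap hp hq W]
  exact gmet_Pmap_Pmap hq hpq Z (Pmap p q W)

end

theorem stmt2_general (p q : ℍ[ℝ]) (hp : ‖p‖ = 1) (hq : ‖q‖ = 1)
    (Z Z' : ℍ[ℝ] × ℍ[ℝ]) :
    Pmap p q (Pmap p q Z) = Z ∧
    Pmap p q (Jmap p q Z) = -(Jmap p q (Pmap p q Z)) ∧
    gmet p q (Pmap p q Z) (Pmap p q Z') = gmet p q Z Z' ∧
    gmet p q (Pmap p q Z) Z' = gmet p q Z (Pmap p q Z') := by
  have hp0 : p ≠ 0 := norm_ne_zero_iff.mp (hp ▸ one_ne_zero)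
  have hq0 : q ≠ 0 := norm_ne_zero_iff.mp (hq ▸ one_ne_zero)
  have hpq : ‖p‖ = ‖q‖ := hp.trans hq.symm
  exact ⟨Pmap_Pmap hp0 hq0 Z, Pmap_Jmap hp0 hq0 Z, gmet_Pmap_Pmap hq0 hpq Z Z',
    gmet_Pmap_left hq0 hpq Z Z'⟩

/-- `P` is involutive, anti-commutes with `J`, is compatible with `g`
and is symmetric. -/
theorem stmt2 (p q : ℍ[ℝ]) (hp : ‖p‖ = 1) (hq : ‖q‖ = 1)
    (Z Z' : ℍ[ℝ] × ℍ[ℝ]) (hZ1 : ipQ Z.1 p = 0) (hZ2 : ipQ Z.2 q = 0)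
    (hZ'1 : ipQ Z'.1 p = 0) (hZ'2 : ipQ Z'.2 q = 0) :
    Pmap p q (Pmap p q Z) = Z ∧
    Pmap p q (Jmap p q Z) = -(Jmap p q (Pmap p q Z)) ∧
    gmet p q (Pmap p q Z) (Pmap p q Z') = gmet p q Z Z' ∧
    gmet p q (Pmap p q Z) Z' = gmet p q Z (Pmap p q Z') :=
  stmt2_general p q hp hq Z Z'
end
end

section
/- Let p, q be unit quaternions and let Z be a tangent vector to S³×S³ at (p,q). Then QZ = (1/√3)(2 P(JZ) − JZ) and PZ = ½(Z − √3 Q(JZ)), where Q(U,V) = (−U,V). -/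
noncomputable section

open Quaternion

/-- `QZ = (1/√3)(2P(JZ) − JZ)` and `PZ = ½(Z − √3 Q(JZ))`. -/
theorem stmt3 (p q : ℍ[ℝ]) (hp : ‖p‖ = 1) (hq : ‖q‖ = 1)
    (Z : ℍ[ℝ] × ℍ[ℝ]) (hZ1 : ipQ Z.1 p = 0) (hZ2 : ipQ Z.2 q = 0) :
    Qmap Z = (Real.sqrt 3)⁻¹ • ((2 : ℝ) • Pmap p q (Jmap p q Z) - Jmap p q Z) ∧
    Pmap p q Z = (1 / 2 : ℝ) • (Z - Real.sqrt 3 • Qmap (Jmap p q Z)) := by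
  have hp0 : p ≠ 0 := by intro h; simp [h] at hp
  have hq0 : q ≠ 0 := by intro h; simp [h] at hq
  have h1 : p * q⁻¹ * (q * p⁻¹ * Z.1) = Z.1 := by
    rw [show p * q⁻¹ * (q * p⁻¹ * Z.1) = p * (q⁻¹ * q) * p⁻¹ * Z.1 by noncomm_ring,
      inv_mul_cancel₀ hq0, mul_one, mul_inv_cancel₀ hp0, one_mul]
  have h2 : q * p⁻¹ * (p * q⁻¹ * Z.2) = Z.2 := by
    rw [show q * p⁻¹ * (p * q⁻¹ * Z.2) = q * (p⁻¹ * p) * q⁻¹ * Z.2 by noncomm_ring,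
      inv_mul_cancel₀ hp0, mul_one, mul_inv_cancel₀ hq0, one_mul]
  have h3 : Real.sqrt 3 * Real.sqrt 3 = 3 := Real.mul_self_sqrt (by norm_num)
  have h4 : Real.sqrt 3 ≠ 0 := by positivity
  refine ⟨Prod.ext ?_ ?_, Prod.ext ?_ ?_⟩ <;>
  · simp only [Qmap, Pmap, Jmap, Prod.smul_fst, Prod.smul_snd, Prod.fst_sub,
      Prod.snd_sub, mul_smul_comm, mul_sub, mul_add, mul_neg, h1, h2,
      smul_sub, smul_add, smul_neg, smul_smul]
    match_scalars <;> field_simp <;> linarith [h3]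
end
end

section
/- Let p, q be unit quaternions and let Z be a tangent vector to S³×S³ at (p,q) with g(Z,Z) = 1 and PZ = −½ Z + (√3/2) JZ. Set ξ = (1/√3) Z − JZ. Then Qξ = −ξ (i.e. the second component of ξ vanishes, so ξ lies entirely along the first S³-factor) and ⟨ξ,ξ⟩ = 1. -/
noncomputable section

open Quaternion

/-!
The second component of `PZ = -½Z + (√3/2)JZ` collapses to `qp⁻¹U = -qp⁻¹U`, so `Z = (0, V)`.
Then `JZ = (1/√3)(2pq⁻¹V, V)` and `ξ = (-(2/√3)pq⁻¹V, 0)`; as left multiplication by the unit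
`pq⁻¹` is an isometry, both `g(Z,Z)` and `⟨ξ,ξ⟩` equal `(4/3)|V|²`.
-/

lemma ipQ_self (x : ℍ[ℝ]) : ipQ x x = ‖x‖ ^ 2 := by
  rw [ipQ, Quaternion.self_mul_star, Quaternion.re_coe, Quaternion.normSq_eq_norm_mul_self, sq]

lemma ip2Q_self (Z : ℍ[ℝ] × ℍ[ℝ]) : ip2Q Z Z = ‖Z.1‖ ^ 2 + ‖Z.2‖ ^ 2 := by
  rw [ip2Q, ipQ_self, ipQ_self]

lemma Qmap_eq_neg_of_snd_eq_zero {ξ : ℍ[ℝ] × ℍ[ℝ]} (h : ξ.2 = 0) : Qmap ξ = -ξ :=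
  Prod.ext rfl (by simp [Qmap, h])

lemma norm_mul_inv_mul_of_norm_eq {p q : ℍ[ℝ]} (hpq : ‖p‖ = ‖q‖) (hq : q ≠ 0) (V : ℍ[ℝ]) :
    ‖p * q⁻¹ * V‖ = ‖V‖ := by
  rw [norm_mul, norm_mul, norm_inv, hpq, mul_inv_cancel₀ (norm_ne_zero_iff.2 hq), one_mul]

lemma norm_inv_sqrt_three_smul_sq (x : ℍ[ℝ]) : ‖(Real.sqrt 3)⁻¹ • x‖ ^ 2 = ‖x‖ ^ 2 / 3 := by
  rw [norm_smul, mul_pow, norm_inv, Real.norm_of_nonneg (Real.sqrt_nonneg 3), inv_pow,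
    Real.sq_sqrt (by norm_num), inv_mul_eq_div]

lemma fst_eq_zero_of_Pmap_eq {p q : ℍ[ℝ]} (hp : p ≠ 0) (hq : q ≠ 0) {Z : ℍ[ℝ] × ℍ[ℝ]}
    (heig : Pmap p q Z = -((1 / 2 : ℝ) • Z) + (Real.sqrt 3 / 2 : ℝ) • Jmap p q Z) :
    Z.1 = 0 := by
  have h2 := congrArg Prod.snd heig
  simp only [Pmap, Jmap, Prod.snd_neg, Prod.snd_add, Prod.smul_snd, smul_smul] at h2
  have hcoef : Real.sqrt 3 / 2 * (Real.sqrt 3)⁻¹ = 1 / 2 := by field_simp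
  rw [hcoef] at h2
  have hzero : q * p⁻¹ * Z.1 = 0 := by
    have : (2 : ℝ) • (q * p⁻¹ * Z.1) = 0 := by linear_combination (norm := module) h2
    exact (smul_eq_zero.mp this).resolve_left two_ne_zero
  simpa [hp, hq] using hzero

lemma Jmap_zero_fst (p q V : ℍ[ℝ]) :
    Jmap p q (0, V) = ((Real.sqrt 3)⁻¹ • (2 : ℝ) • (p * q⁻¹ * V), (Real.sqrt 3)⁻¹ • V) := by
  simp [Jmap]

lemma gmet_zero_fst {p q : ℍ[ℝ]} (hpq : ‖p‖ = ‖q‖) (hq : q ≠ 0) (V : ℍ[ℝ]) :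
    gmet p q (0, V) (0, V) = 4 / 3 * ‖V‖ ^ 2 := by
  rw [gmet, ip2Q_self, ip2Q_self, Jmap_zero_fst, norm_inv_sqrt_three_smul_sq,
    norm_inv_sqrt_three_smul_sq, norm_smul, norm_mul_inv_mul_of_norm_eq hpq hq]
  norm_num
  ring

lemma inv_sqrt_three_smul_sub_Jmap_zero_fst (p q V : ℍ[ℝ]) :
    (Real.sqrt 3)⁻¹ • ((0 : ℍ[ℝ]), V) - Jmap p q (0, V)
      = (-((Real.sqrt 3)⁻¹ • (2 : ℝ) • (p * q⁻¹ * V)), 0) := by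
  simp [Jmap_zero_fst]

lemma ip2Q_inv_sqrt_three_smul_sub_Jmap_zero_fst {p q : ℍ[ℝ]} (hpq : ‖p‖ = ‖q‖) (hq : q ≠ 0)
    (V : ℍ[ℝ]) :
    ip2Q ((Real.sqrt 3)⁻¹ • ((0 : ℍ[ℝ]), V) - Jmap p q (0, V))
        ((Real.sqrt 3)⁻¹ • ((0 : ℍ[ℝ]), V) - Jmap p q (0, V)) = 4 / 3 * ‖V‖ ^ 2 := by
  rw [inv_sqrt_three_smul_sub_Jmap_zero_fst, ip2Q_self, norm_neg, norm_inv_sqrt_three_smul_sq,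
    norm_smul, norm_mul_inv_mul_of_norm_eq hpq hq]
  norm_num
  ring

theorem stmt7_general (p q : ℍ[ℝ]) (hp : ‖p‖ = 1) (hq : ‖q‖ = 1)
    (Z : ℍ[ℝ] × ℍ[ℝ])
    (hunit : gmet p q Z Z = 1)
    (heig : Pmap p q Z = -((1 / 2 : ℝ) • Z) + (Real.sqrt 3 / 2 : ℝ) • Jmap p q Z)
    (ξ : ℍ[ℝ] × ℍ[ℝ]) (hξ : ξ = (Real.sqrt 3)⁻¹ • Z - Jmap p q Z) :
    Qmap ξ = -ξ ∧ ip2Q ξ ξ = 1 := by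
  have hp0 : p ≠ 0 := norm_ne_zero_iff.1 (by simp [hp])
  have hq0 : q ≠ 0 := norm_ne_zero_iff.1 (by simp [hq])
  have hpq : ‖p‖ = ‖q‖ := hp.trans hq.symm
  obtain ⟨U, V⟩ := Z
  obtain rfl : U = 0 := fst_eq_zero_of_Pmap_eq hp0 hq0 heig
  subst hξ
  refine ⟨Qmap_eq_neg_of_snd_eq_zero ?_, ?_⟩
  · rw [inv_sqrt_three_smul_sub_Jmap_zero_fst]
  · rw [ip2Q_inv_sqrt_three_smul_sub_Jmap_zero_fst hpq hq0, ← hunit, gmet_zero_fst hpq hq0]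

/-- for a `g`-unit eigendirection `Z` with angle `π/3`, the vector
`ξ = (1/√3)Z − JZ` satisfies `Qξ = −ξ` and has Euclidean length `1`. -/
theorem stmt7 (p q : ℍ[ℝ]) (hp : ‖p‖ = 1) (hq : ‖q‖ = 1)
    (Z : ℍ[ℝ] × ℍ[ℝ]) (hZ1 : ipQ Z.1 p = 0) (hZ2 : ipQ Z.2 q = 0)
    (hunit : gmet p q Z Z = 1)
    (heig : Pmap p q Z = -((1 / 2 : ℝ) • Z) + (Real.sqrt 3 / 2 : ℝ) • Jmap p q Z)
    (ξ : ℍ[ℝ] × ℍ[ℝ]) (hξ : ξ = (Real.sqrt 3)⁻¹ • Z - Jmap p q Z) :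
    Qmap ξ = -ξ ∧ ip2Q ξ ξ = 1 :=
  stmt7_general p q hp hq Z hunit heig ξ hξ
end
end

section
/- Let p, q be unit quaternions, α, β imaginary quaternions, Λ ∈ (0, π/2), and set Z = (pα, qβ). (i) If PZ = cos(2Λ + 2π/3) Z + sin(2Λ + 2π/3) JZ, then β = ½(1 − √3 cot Λ) α. (ii) If PZ = cos(−2Λ + 2π/3) Z + sin(−2Λ + 2π/3) JZ, then β = ½(1 + √3 cot Λ) α. -/
noncomputable section

open Quaternion

/-! The second component of `PZ = cos θ • Z + sin θ • JZ` reads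
`qα = q (cos θ • β + (sin θ / √3) • (β - 2α))`; cancelling `q` gives
`(cos θ + sin θ / √3) • β = (1 + 2 sin θ / √3) • α`, and for `θ = 2Λ + 2π/3` the ratio of the
two coefficients is `½(1 - √3 cot Λ)`. Case (ii) is case (i) at the angle `-Λ`. -/

theorem smul_eq_smul_of_Pmap_eq {p q α β : ℍ[ℝ]} (hp : p ≠ 0) (hq : q ≠ 0) {c s : ℝ}
    (h : Pmap p q (p * α, q * β) = c • (p * α, q * β) + s • Jmap p q (p * α, q * β)) :
    (c + s * (Real.sqrt 3)⁻¹) • β = (1 + 2 * (s * (Real.sqrt 3)⁻¹)) • α := by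
  have hqα : q * p⁻¹ * (p * α) = q * α := by
    rw [mul_assoc, inv_mul_cancel_left₀ hp]
  have h₂ := congrArg Prod.snd h
  simp only [Pmap, Jmap, Prod.snd_add, Prod.smul_snd, hqα] at h₂
  have hα : α = c • β + s • ((Real.sqrt 3)⁻¹ • (-((2 : ℝ) • α) + β)) := by
    refine mul_left_cancel₀ hq ?_
    rw [h₂]
    simp only [mul_add, mul_smul_comm, mul_neg]
  linear_combination (norm := module) -hα

theorem cos_add_sin_div_sqrt_three (Λ : ℝ) :
    Real.cos (2 * Λ + 2 * Real.pi / 3) + Real.sin (2 * Λ + 2 * Real.pi / 3) * (Real.sqrt 3)⁻¹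
      = -(4 / Real.sqrt 3) * (Real.sin Λ * Real.cos Λ) := by
  have h3 : Real.sqrt 3 * Real.sqrt 3 = 3 := Real.mul_self_sqrt (by norm_num)
  have hπ : 2 * Real.pi / 3 = Real.pi - Real.pi / 3 := by ring
  rw [Real.cos_add, Real.sin_add, hπ, Real.cos_pi_sub, Real.sin_pi_sub,
    Real.cos_pi_div_three, Real.sin_pi_div_three, Real.sin_two_mul, Real.cos_two_mul]
  field_simp
  linear_combination (-2 * Real.cos Λ * Real.sin Λ) * h3

theorem one_add_two_sin_div_sqrt_three (Λ : ℝ) :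
    1 + 2 * (Real.sin (2 * Λ + 2 * Real.pi / 3) * (Real.sqrt 3)⁻¹)
      = 2 / Real.sqrt 3 * Real.cos Λ * (Real.sqrt 3 * Real.cos Λ - Real.sin Λ) := by
  have hπ : 2 * Real.pi / 3 = Real.pi - Real.pi / 3 := by ring
  rw [Real.sin_add, hπ, Real.cos_pi_sub, Real.sin_pi_sub,
    Real.cos_pi_div_three, Real.sin_pi_div_three, Real.sin_two_mul, Real.cos_two_mul]
  field_simp
  ring

theorem eq_smul_of_Pmap_eq {p q α β : ℍ[ℝ]} (hp : p ≠ 0) (hq : q ≠ 0) {Λ : ℝ}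
    (hsin : Real.sin Λ ≠ 0) (hcos : Real.cos Λ ≠ 0)
    (h : Pmap p q (p * α, q * β) =
      Real.cos (2 * Λ + 2 * Real.pi / 3) • (p * α, q * β)
        + Real.sin (2 * Λ + 2 * Real.pi / 3) • Jmap p q (p * α, q * β)) :
    β = ((1 - Real.sqrt 3 * (Real.cos Λ / Real.sin Λ)) / 2 : ℝ) • α := by
  have hrel := smul_eq_smul_of_Pmap_eq hp hq h
  rw [cos_add_sin_div_sqrt_three, one_add_two_sin_div_sqrt_three] at hrel
  have hk : -(4 / Real.sqrt 3) * (Real.sin Λ * Real.cos Λ) ≠ 0 := by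
    have : Real.sqrt 3 ≠ 0 := by positivity
    simp [*]
  rw [← inv_smul_smul₀ hk β, hrel, smul_smul]
  congr 1
  field_simp
  ring

theorem stmt8_general (p q : ℍ[ℝ]) (hp : ‖p‖ = 1) (hq : ‖q‖ = 1)
    (α β : ℍ[ℝ])
    (Λ : ℝ) (hΛ : Λ ∈ Set.Ioo 0 (Real.pi / 2))
    (Z : ℍ[ℝ] × ℍ[ℝ]) (hZ : Z = (p * α, q * β)) :
    (Pmap p q Z =
        Real.cos (2 * Λ + 2 * Real.pi / 3) • Z
          + Real.sin (2 * Λ + 2 * Real.pi / 3) • Jmap p q Z →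
      β = ((1 - Real.sqrt 3 * (Real.cos Λ / Real.sin Λ)) / 2 : ℝ) • α) ∧
    (Pmap p q Z =
        Real.cos (-(2 * Λ) + 2 * Real.pi / 3) • Z
          + Real.sin (-(2 * Λ) + 2 * Real.pi / 3) • Jmap p q Z →
      β = ((1 + Real.sqrt 3 * (Real.cos Λ / Real.sin Λ)) / 2 : ℝ) • α) := by
  subst hZ
  have hp₀ : p ≠ 0 := norm_ne_zero_iff.mp (by simp [hp])
  have hq₀ : q ≠ 0 := norm_ne_zero_iff.mp (by simp [hq])
  have hsin : Real.sin Λ ≠ 0 :=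
    (Real.sin_pos_of_pos_of_lt_pi hΛ.1 (by linarith [hΛ.2, Real.pi_pos])).ne'
  have hcos : Real.cos Λ ≠ 0 :=
    (Real.cos_pos_of_mem_Ioo ⟨by linarith [hΛ.1, Real.pi_pos], hΛ.2⟩).ne'
  refine ⟨eq_smul_of_Pmap_eq hp₀ hq₀ hsin hcos, fun h => ?_⟩
  have h' := eq_smul_of_Pmap_eq (Λ := -Λ) hp₀ hq₀ (by simpa using hsin) (by simpa using hcos)
    (by simpa only [mul_neg] using h)
  simpa [Real.sin_neg, Real.cos_neg, neg_div, div_neg, sub_eq_add_neg] using h'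

/-- for `Z = (pα, qβ)` a `P`-eigendirection with angle `±Λ + π/3`,
the second component is determined: `β = ½(1 ∓ √3 cot Λ)α`. -/
theorem stmt8 (p q : ℍ[ℝ]) (hp : ‖p‖ = 1) (hq : ‖q‖ = 1)
    (α β : ℍ[ℝ]) (hα : α.re = 0) (hβ : β.re = 0)
    (Λ : ℝ) (hΛ : Λ ∈ Set.Ioo 0 (Real.pi / 2))
    (Z : ℍ[ℝ] × ℍ[ℝ]) (hZ : Z = (p * α, q * β)) :
    (Pmap p q Z =
        Real.cos (2 * Λ + 2 * Real.pi / 3) • Z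
          + Real.sin (2 * Λ + 2 * Real.pi / 3) • Jmap p q Z →
      β = ((1 - Real.sqrt 3 * (Real.cos Λ / Real.sin Λ)) / 2 : ℝ) • α) ∧
    (Pmap p q Z =
        Real.cos (-(2 * Λ) + 2 * Real.pi / 3) • Z
          + Real.sin (-(2 * Λ) + 2 * Real.pi / 3) • Jmap p q Z →
      β = ((1 + Real.sqrt 3 * (Real.cos Λ / Real.sin Λ)) / 2 : ℝ) • α) :=
  stmt8_general p q hp hq α β Λ hΛ Z hZ
end
end

section
/- Let p, q be unit quaternions, α, γ imaginary quaternions, and Λ ∈ ℝ with sin Λ ≠ 0. Put X = (pα, ½(1 − √3 cot Λ) qα) and Y = (pγ, ½(1 + √3 cot Λ) qγ). Then G(X,Y) = (1/(2√3))(1 + cot²Λ) · (2 p(α×γ), q(α×γ)). -/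
noncomputable section

open Quaternion

/-! With `β = aα` and `δ = bγ` every cross product in `G(X,Y)` is a multiple of `α × γ`, with
coefficients `a + b + 1 − 2ab` and `2 − a − b − ab`. For `a, b = ½(1 ∓ √3 cot Λ)` one has
`a + b = 1` and `ab = ¼(1 − 3 cot² Λ)`, so both coefficients are multiples of `1 + cot² Λ`. -/

lemma crossQ_smul_left (r : ℝ) (a b : ℍ[ℝ]) : crossQ (r • a) b = r • crossQ a b := by
  simp only [crossQ, smul_mul_assoc, mul_smul_comm, ← smul_sub, smul_comm r]

lemma crossQ_smul_right (r : ℝ) (a b : ℍ[ℝ]) : crossQ a (r • b) = r • crossQ a b := by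
  simp only [crossQ, smul_mul_assoc, mul_smul_comm, ← smul_sub, smul_comm r]

lemma Gmap_mul_mul {p q : ℍ[ℝ]} (hp : p ≠ 0) (hq : q ≠ 0) (α β γ δ : ℍ[ℝ]) :
    Gmap p q (p * α, q * β) (p * γ, q * δ) =
      (2 / (3 * Real.sqrt 3) : ℝ) •
        (p * (crossQ β γ + crossQ α δ + crossQ α γ - (2 : ℝ) • crossQ β δ),
          q * (-crossQ α δ - crossQ β γ + (2 : ℝ) • crossQ α γ - crossQ β δ)) := by
  simp only [Gmap, inv_mul_cancel_left₀ hp, inv_mul_cancel_left₀ hq]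

lemma Gmap_mul_smul_mul {p q : ℍ[ℝ]} (hp : p ≠ 0) (hq : q ≠ 0) (a b : ℝ) (α γ : ℍ[ℝ]) :
    Gmap p q (p * α, a • (q * α)) (p * γ, b • (q * γ)) =
      (((2 / (3 * Real.sqrt 3)) * (a + b + 1 - 2 * (a * b)) : ℝ) • (p * crossQ α γ),
        ((2 / (3 * Real.sqrt 3)) * (2 - a - b - a * b) : ℝ) • (q * crossQ α γ)) := by
  rw [← mul_smul_comm, ← mul_smul_comm, Gmap_mul_mul hp hq]
  simp only [crossQ_smul_left, crossQ_smul_right, smul_smul, Prod.smul_mk, ← mul_smul_comm]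
  congr 2 <;> module

theorem stmt9_general (p q : ℍ[ℝ]) (hp : ‖p‖ = 1) (hq : ‖q‖ = 1)
    (α γ : ℍ[ℝ])
    (Λ : ℝ)
    (X Y : ℍ[ℝ] × ℍ[ℝ])
    (hX : X = (p * α, ((1 - Real.sqrt 3 * (Real.cos Λ / Real.sin Λ)) / 2 : ℝ) • (q * α)))
    (hY : Y = (p * γ, ((1 + Real.sqrt 3 * (Real.cos Λ / Real.sin Λ)) / 2 : ℝ) • (q * γ))) :
    Gmap p q X Y =
      ((1 + (Real.cos Λ / Real.sin Λ) ^ 2) / (2 * Real.sqrt 3) : ℝ) •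
        (((2 : ℝ) • (p * crossQ α γ), q * crossQ α γ) : ℍ[ℝ] × ℍ[ℝ]) := by
  have hp0 : p ≠ 0 := norm_ne_zero_iff.mp (hp ▸ one_ne_zero)
  have hq0 : q ≠ 0 := norm_ne_zero_iff.mp (hq ▸ one_ne_zero)
  generalize Real.cos Λ / Real.sin Λ = c at hX hY ⊢
  have h3 : Real.sqrt 3 ^ 2 = 3 := Real.sq_sqrt (by norm_num)
  rw [hX, hY, Gmap_mul_smul_mul hp0 hq0, Prod.smul_mk, smul_smul]
  congr 2
  · field_simp
    linear_combination c ^ 2 * h3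
  · field_simp
    linear_combination c ^ 2 * h3

/-- evaluation of `G` on the special tangent vectors
`X = (pα, ½(1 − √3 cot Λ)qα)` and `Y = (pγ, ½(1 + √3 cot Λ)qγ)`. -/
theorem stmt9 (p q : ℍ[ℝ]) (hp : ‖p‖ = 1) (hq : ‖q‖ = 1)
    (α γ : ℍ[ℝ]) (hα : α.re = 0) (hγ : γ.re = 0)
    (Λ : ℝ) (hΛ : Real.sin Λ ≠ 0)
    (X Y : ℍ[ℝ] × ℍ[ℝ])
    (hX : X = (p * α, ((1 - Real.sqrt 3 * (Real.cos Λ / Real.sin Λ)) / 2 : ℝ) • (q * α)))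
    (hY : Y = (p * γ, ((1 + Real.sqrt 3 * (Real.cos Λ / Real.sin Λ)) / 2 : ℝ) • (q * γ))) :
    Gmap p q X Y =
      ((1 + (Real.cos Λ / Real.sin Λ) ^ 2) / (2 * Real.sqrt 3) : ℝ) •
        (((2 : ℝ) • (p * crossQ α γ), q * crossQ α γ) : ℍ[ℝ] × ℍ[ℝ]) :=
  stmt9_general p q hp hq α γ Λ X Y hX hY
end
end

section
/- Let c ∈ ℝ, let I ⊆ ℝ be an open interval, and let Λ : I → (0, π/2) be differentiable with √3 e^c − 2 cos t sin t tan Λ(t) ≠ 0 for all t ∈ I and Λ′(t) = −(2 cos(2t) sin²Λ(t)) / (√3 e^c − 2 cos t sin t tan Λ(t)). Then (d/dt) [ (√3 e^c cot Λ(t) − sin 2t)² ] = 2 sin 4t; equivalently, the function t ↦ (√3 e^c cot Λ(t) − sin 2t)² + ½ cos 4t is constant on I. -/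
/-!
Write `k = √3 e^c` and `D = k - sin 2t · tan Λ` for the denominator of the ODE. Then
`u := k cot Λ - sin 2t = D cot Λ`, while the ODE gives `u' = 2 cos 2t (k - D) / D = sin 4t tan Λ / D`.
Hence `(u²)' = 2 u u' = 2 sin 4t`, and `u² + ½ cos 4t` has zero derivative on the interval.
-/

open Real Set

namespace Real

theorem hasDerivAt_cot_comp {f : ℝ → ℝ} {f' x : ℝ} (hf : HasDerivAt f f' x)
    (hs : sin (f x) ≠ 0) :
    HasDerivAt (fun y => cos (f y) / sin (f y)) (-f' / sin (f x) ^ 2) x :=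
  (hf.cos.div hf.sin hs).congr_deriv <| by
    congr 1
    linear_combination -f' * sin_sq_add_cos_sq (f x)

theorem hasDerivAt_sin_two_mul (t : ℝ) :
    HasDerivAt (fun s => sin (2 * s)) (2 * cos (2 * t)) t :=
  (((hasDerivAt_id t).const_mul 2).sin).congr_deriv <| by simp only [id_eq]; ring

theorem hasDerivAt_half_cos_four_mul (t : ℝ) :
    HasDerivAt (fun s => 1 / 2 * cos (4 * s)) (-(2 * sin (4 * t))) t :=
  ((((hasDerivAt_id t).const_mul 4).cos).const_mul _).congr_deriv <| by simp only [id_eq]; ring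

section CotODE

variable {k : ℝ} {Λ : ℝ → ℝ} {t : ℝ}

theorem mul_cot_sub_sin_two_mul_eq (hs : sin (Λ t) ≠ 0) (hc : cos (Λ t) ≠ 0) :
    k * (cos (Λ t) / sin (Λ t)) - sin (2 * t)
      = (k - 2 * cos t * sin t * tan (Λ t)) * (cos (Λ t) / sin (Λ t)) := by
  rw [tan_eq_sin_div_cos, sin_two_mul]
  field_simp

theorem hasDerivAt_mul_cot_sub_sin_two_mul (hs : sin (Λ t) ≠ 0)
    (hD : k - 2 * cos t * sin t * tan (Λ t) ≠ 0)
    (hΛ : HasDerivAt Λ (-(2 * cos (2 * t) * sin (Λ t) ^ 2) /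
      (k - 2 * cos t * sin t * tan (Λ t))) t) :
    HasDerivAt (fun s => k * (cos (Λ s) / sin (Λ s)) - sin (2 * s))
      (sin (4 * t) * tan (Λ t) / (k - 2 * cos t * sin t * tan (Λ t))) t :=
  (((hasDerivAt_cot_comp hΛ hs).const_mul k).sub (hasDerivAt_sin_two_mul t)).congr_deriv <| by
    rw [show 4 * t = 2 * (2 * t) by ring, sin_two_mul (2 * t), sin_two_mul t]
    field_simp
    ring

theorem hasDerivAt_sq_mul_cot_sub_sin_two_mul (hs : sin (Λ t) ≠ 0) (hc : cos (Λ t) ≠ 0)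
    (hD : k - 2 * cos t * sin t * tan (Λ t) ≠ 0)
    (hΛ : HasDerivAt Λ (-(2 * cos (2 * t) * sin (Λ t) ^ 2) /
      (k - 2 * cos t * sin t * tan (Λ t))) t) :
    HasDerivAt (fun s => (k * (cos (Λ s) / sin (Λ s)) - sin (2 * s)) ^ 2)
      (2 * sin (4 * t)) t :=
  ((hasDerivAt_mul_cot_sub_sin_two_mul hs hD hΛ).pow 2).congr_deriv <| by
    have htan : tan (Λ t) * (cos (Λ t) / sin (Λ t)) = 1 := by
      rw [tan_eq_sin_div_cos]
      field_simp
    rw [mul_cot_sub_sin_two_mul_eq hs hc]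
    calc _ = 2 * sin (4 * t) * (tan (Λ t) * (cos (Λ t) / sin (Λ t)))
          * ((k - 2 * cos t * sin t * tan (Λ t)) / (k - 2 * cos t * sin t * tan (Λ t))) := by
          ring
      _ = 2 * sin (4 * t) := by rw [htan, div_self hD, mul_one, mul_one]

end CotODE

end Real

theorem add_half_cos_four_mul_eq_of_hasDerivAt {f : ℝ → ℝ} {a b : ℝ}
    (hf : ∀ t ∈ Ioo a b, HasDerivAt f (2 * sin (4 * t)) t) {s t : ℝ}
    (hs : s ∈ Ioo a b) (ht : t ∈ Ioo a b) :
    f s + 1 / 2 * cos (4 * s) = f t + 1 / 2 * cos (4 * t) := by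
  have hg : ∀ x ∈ Ioo a b, HasDerivAt (fun y => f y + 1 / 2 * cos (4 * y)) 0 x := fun x hx =>
    ((hf x hx).add (hasDerivAt_half_cos_four_mul x)).congr_deriv (by ring)
  exact isOpen_Ioo.is_const_of_deriv_eq_zero isPreconnected_Ioo
    (fun x hx => (hg x hx).differentiableAt.differentiableWithinAt) (fun x hx => (hg x hx).deriv)
    hs ht

/-- along a solution `Λ` of the ODE
`Λ′(t) = −2cos(2t)sin²Λ / (√3 e^c − 2 cos t sin t tan Λ)`, the expression
`(√3 e^c cot Λ − sin 2t)²` has derivative `2 sin 4t`; equivalently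
`t ↦ (√3 e^c cot Λ(t) − sin 2t)² + ½ cos 4t` is constant on the interval. -/
theorem stmt13 (c a b : ℝ) (I : Set ℝ) (hI : I = Set.Ioo a b)
    (Λ : ℝ → ℝ) (hrange : ∀ t ∈ I, Λ t ∈ Set.Ioo 0 (π / 2))
    (hden : ∀ t ∈ I,
      Real.sqrt 3 * Real.exp c - 2 * Real.cos t * Real.sin t * Real.tan (Λ t) ≠ 0)
    (hΛ : ∀ t ∈ I, HasDerivAt Λ
      (-(2 * Real.cos (2 * t) * Real.sin (Λ t) ^ 2) /
        (Real.sqrt 3 * Real.exp c - 2 * Real.cos t * Real.sin t * Real.tan (Λ t))) t) :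
    (∀ t ∈ I, HasDerivAt
        (fun s => (Real.sqrt 3 * Real.exp c * (Real.cos (Λ s) / Real.sin (Λ s))
          - Real.sin (2 * s)) ^ 2)
        (2 * Real.sin (4 * t)) t) ∧
    (∀ s ∈ I, ∀ t ∈ I,
      (Real.sqrt 3 * Real.exp c * (Real.cos (Λ s) / Real.sin (Λ s))
          - Real.sin (2 * s)) ^ 2 + (1 / 2) * Real.cos (4 * s)
        = (Real.sqrt 3 * Real.exp c * (Real.cos (Λ t) / Real.sin (Λ t))
          - Real.sin (2 * t)) ^ 2 + (1 / 2) * Real.cos (4 * t)) := by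
  subst hI
  have hsq : ∀ t ∈ Ioo a b, HasDerivAt
      (fun s => (√3 * exp c * (cos (Λ s) / sin (Λ s)) - sin (2 * s)) ^ 2) (2 * sin (4 * t)) t := by
    intro t ht
    obtain ⟨hpos, hlt⟩ := hrange t ht
    have hs : sin (Λ t) ≠ 0 := (sin_pos_of_mem_Ioo ⟨hpos, by linarith [pi_pos]⟩).ne'
    have hc : cos (Λ t) ≠ 0 := (cos_pos_of_mem_Ioo ⟨by linarith [pi_pos], hlt⟩).ne'
    exact hasDerivAt_sq_mul_cot_sub_sin_two_mul hs hc (hden t ht) (hΛ t ht)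
  exact ⟨hsq, fun s hs t ht => add_half_cos_four_mul_eq_of_hasDerivAt hsq hs ht⟩
end

section
/- Let ω, μ, t ∈ ℝ and Λ ∈ (0, π/2) satisfy ( (2√3 e^ω)/tan Λ − 2 sin 2t )² = e^{ω+μ} − 2 − 2 cos 4t. Then −4 e^ω (cos 2Λ + 2) csc²Λ + 8√3 cot Λ sin 2t + 8 sinh ω = −e^μ. (Consequently, under this algebraic relation, the compatibility equation Δμ = −4e^ω(cos 2Λ + 2)csc²Λ + 8√3 cot Λ sin 2t + 8 sinh ω reduces to the Liouville equation Δμ = −e^μ.) -/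
noncomputable section

open Real

/-! Put `E = e^ω`, `k = cot Λ`, `x = sin 2t`. Since `cos 4t = 1 - 2x²` and
`(cos 2Λ + 2) csc² Λ = 3k² + 1`, the hypothesis becomes `12E²k² - 8√3 E k x = E e^μ - 4` and
`E` times the left-hand side of the claim becomes `-12E²k² + 8√3 E k x - 4`. -/

theorem Real.cos_two_mul_add_two_div_sin_sq {x : ℝ} (hx : sin x ≠ 0) :
    (cos (2 * x) + 2) / sin x ^ 2 = 3 * (cos x / sin x) ^ 2 + 1 := by
  rw [cos_two_mul]
  field_simp
  linear_combination -sin_sq_add_cos_sq x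

theorem Real.cos_four_mul_eq_one_sub_sin_two_mul_sq (t : ℝ) :
    cos (4 * t) = 1 - 2 * sin (2 * t) ^ 2 := by
  rw [show 4 * t = 2 * (2 * t) by ring, cos_two_mul, cos_sq']
  ring

theorem liouville_rhs_eq_of_sq_eq {E k x M : ℝ} (hE : E ≠ 0)
    (h : (2 * √3 * E * k - 2 * x) ^ 2 = E * M - 4 + 4 * x ^ 2) :
    -4 * E * (3 * k ^ 2 + 1) + 8 * √3 * k * x + 4 * (E - E⁻¹) = -M := by
  have h3 : √3 ^ 2 = 3 := sq_sqrt (by norm_num)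
  field_simp
  linear_combination -h + 4 * E ^ 2 * k ^ 2 * h3

/-- under the algebraic relation
`((2√3 e^ω)/tan Λ − 2 sin 2t)² = e^{ω+μ} − 2 − 2 cos 4t`, one has
`−4e^ω(cos 2Λ + 2)csc²Λ + 8√3 cot Λ sin 2t + 8 sinh ω = −e^μ`;
hence the compatibility equation for `μ` reduces to the Liouville equation. -/
theorem stmt14 (ω μ t Λ : ℝ) (hΛ : Λ ∈ Set.Ioo 0 (π / 2))
    (h : (2 * Real.sqrt 3 * Real.exp ω / Real.tan Λ - 2 * Real.sin (2 * t)) ^ 2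
      = Real.exp (ω + μ) - 2 - 2 * Real.cos (4 * t)) :
    -4 * Real.exp ω * (Real.cos (2 * Λ) + 2) / Real.sin Λ ^ 2
      + 8 * Real.sqrt 3 * (Real.cos Λ / Real.sin Λ) * Real.sin (2 * t)
      + 8 * Real.sinh ω
      = -Real.exp μ := by
  have hsin : sin Λ ≠ 0 :=
    (sin_pos_of_pos_of_lt_pi hΛ.1 (hΛ.2.trans (half_lt_self pi_pos))).ne'
  rw [div_eq_mul_inv _ (tan Λ), tan_eq_sin_div_cos, inv_div, exp_add,
    cos_four_mul_eq_one_sub_sin_two_mul_sq] at h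
  rw [mul_div_assoc, cos_two_mul_add_two_div_sin_sq hsin, sinh_eq, exp_neg]
  have key := liouville_rhs_eq_of_sq_eq (k := cos Λ / sin Λ) (x := sin (2 * t)) (M := exp μ)
    (exp_pos ω).ne' (by linear_combination h)
  linear_combination key
end
end

section
/- Let U ⊆ ℝ² be open, let β : U → ℝ be smooth, and define Λ = arctan(e^{2β}), so Λ takes values in (0, π/2). Then Λ satisfies ΔΛ = (cot Λ − tan Λ)|∇Λ|² + 4(1 + 2 cos 2Λ) cot Λ on U if and only if β satisfies Δβ = 2(3 − e^{4β}) e^{−4β} on U, where Δ and ∇ denote the Euclidean Laplacian and gradient on ℝ². -/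
noncomputable section

open Real

/-- Partial derivative in the first coordinate direction of `ℝ²`. -/
def pdu {E : Type*} [NormedAddCommGroup E] [NormedSpace ℝ E]
    (f : ℝ × ℝ → E) (x : ℝ × ℝ) : E := fderiv ℝ f x (1, 0)

/-- Partial derivative in the second coordinate direction of `ℝ²`. -/
def pdv {E : Type*} [NormedAddCommGroup E] [NormedSpace ℝ E]
    (f : ℝ × ℝ → E) (x : ℝ × ℝ) : E := fderiv ℝ f x (0, 1)


def g1 (t : ℝ) : ℝ := 2 * exp (2*t) / (1 + exp (2*t)^2)
def g2 (t : ℝ) : ℝ := (4 * exp (2*t) - 4 * exp (2*t)^3) / (1 + exp (2*t)^2)^2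

lemma hasDerivAt_E (t : ℝ) : HasDerivAt (fun t : ℝ => exp (2*t)) (exp (2*t) * 2) t := by
  have h1 : HasDerivAt (fun t : ℝ => 2*t) 2 t := by
    simpa using (hasDerivAt_id t).const_mul 2
  exact h1.exp

lemma hasDerivAt_G (t : ℝ) :
    HasDerivAt (fun t : ℝ => arctan (exp (2*t))) (g1 t) t := by
  have h3 := (Real.hasDerivAt_arctan (exp (2*t))).comp t (hasDerivAt_E t)
  refine h3.congr_deriv ?_
  unfold g1; field_simp

lemma hasDerivAt_g1 (t : ℝ) : HasDerivAt g1 (g2 t) t := by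
  have hE := hasDerivAt_E t
  have hnum : HasDerivAt (fun t : ℝ => 2 * exp (2*t)) (2 * (exp (2*t) * 2)) t := hE.const_mul 2
  have hden : HasDerivAt (fun t : ℝ => 1 + exp (2*t)^2)
      ((2 : ℕ) * exp (2*t) ^ 1 * (exp (2*t) * 2)) t := (hE.pow 2).const_add 1
  have hne : (1 + exp (2*t)^2) ≠ 0 := by positivity
  have := hnum.div hden hne
  refine this.congr_deriv ?_
  unfold g2; field_simp; ring

lemma Dcomp {f : ℝ × ℝ → ℝ} {h : ℝ → ℝ} {x : ℝ × ℝ} {a : ℝ} (w : ℝ × ℝ)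
    (hh : HasDerivAt h a (f x)) (hf : DifferentiableAt ℝ f x) :
    fderiv ℝ (fun y => h (f y)) x w = a * fderiv ℝ f x w := by
  have H := hh.comp_hasFDerivAt x hf.hasFDerivAt
  have : fderiv ℝ (fun y => h (f y)) x = a • fderiv ℝ f x := H.fderiv
  rw [this]; simp

lemma Dmul {p q : ℝ × ℝ → ℝ} {x : ℝ × ℝ} (w : ℝ × ℝ)
    (hp : DifferentiableAt ℝ p x) (hq : DifferentiableAt ℝ q x) :
    fderiv ℝ (fun y => p y * q y) x w
      = fderiv ℝ p x w * q x + p x * fderiv ℝ q x w := by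
  rw [fderiv_fun_mul hp hq]; simp; ring

lemma key {U : Set (ℝ × ℝ)} (hU : IsOpen U) {β : ℝ × ℝ → ℝ}
    (hβ : ContDiffOn ℝ (⊤ : ℕ∞) β U) {x : ℝ × ℝ} (hx : x ∈ U) (w : ℝ × ℝ) :
    fderiv ℝ (fun y => fderiv ℝ (fun z => arctan (exp (2 * β z))) y w) x w
      = g2 (β x) * (fderiv ℝ β x w)^2
        + g1 (β x) * fderiv ℝ (fun y => fderiv ℝ β y w) x w := by
  have hdOn : DifferentiableOn ℝ β U := hβ.differentiableOn (by simp)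
  have hβat : ∀ y ∈ U, DifferentiableAt ℝ β y := fun y hy =>
    (hdOn y hy).differentiableAt (hU.mem_nhds hy)
  have h1 : ∀ y ∈ U, fderiv ℝ (fun z => arctan (exp (2 * β z))) y w
      = g1 (β y) * fderiv ℝ β y w := fun y hy =>
    Dcomp w (hasDerivAt_G (β y)) (hβat y hy)
  have hev : (fun y => fderiv ℝ (fun z => arctan (exp (2 * β z))) y w)
      =ᶠ[nhds x] fun y => g1 (β y) * fderiv ℝ β y w :=
    Filter.eventuallyEq_of_mem (hU.mem_nhds hx) h1
  rw [hev.fderiv_eq]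
  have hF : ContDiffOn ℝ (⊤ : ℕ∞) (fun y => fderiv ℝ β y) U :=
    hβ.fderiv_of_isOpen hU (by simp)
  have hFat : DifferentiableAt ℝ (fun y => fderiv ℝ β y) x :=
    ((hF.differentiableOn (by simp)) x hx).differentiableAt (hU.mem_nhds hx)
  have hDw : DifferentiableAt ℝ (fun y => fderiv ℝ β y w) x :=
    hFat.clm_apply (differentiableAt_const _)
  have hg1β : DifferentiableAt ℝ (fun y => g1 (β y)) x :=
    ((hasDerivAt_g1 (β x)).differentiableAt).comp x (hβat x hx)
  rw [Dmul w hg1β hDw, Dcomp w (hasDerivAt_g1 (β x)) (hβat x hx)]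
  ring

lemma alg (b Q L : ℝ) :
    (g2 b * Q + g1 b * L
      = (cos (arctan (exp (2*b))) / sin (arctan (exp (2*b)))
          - sin (arctan (exp (2*b))) / cos (arctan (exp (2*b)))) * ((g1 b)^2 * Q)
        + 4 * (1 + 2 * cos (2 * arctan (exp (2*b))))
          * (cos (arctan (exp (2*b))) / sin (arctan (exp (2*b)))))
    ↔ L = 2 * (3 - exp (4*b)) * exp (-(4*b)) := by
  set E := exp (2*b) with hEdef
  have hE : 0 < E := exp_pos _
  have hE4 : exp (4*b) = E^2 := by
    rw [hEdef, ← Real.exp_nat_mul]; ring_nf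
  rw [Real.cos_two_mul, Real.cos_arctan, Real.sin_arctan, Real.exp_neg, hE4]
  set r := Real.sqrt (1 + E^2) with hrdef
  have hr : 0 < r := Real.sqrt_pos.2 (by positivity)
  have hr2 : r^2 = 1 + E^2 := Real.sq_sqrt (by positivity)
  have e1 : (1:ℝ)/r / (E/r) = 1/E := by field_simp
  have e2 : (E/r) / ((1:ℝ)/r) = E := by field_simp
  have e3 : ((1:ℝ)/r)^2 = 1/(1+E^2) := by rw [div_pow, hr2]; simp
  have idA : ((1:ℝ)/r / (E/r) - (E/r) / ((1:ℝ)/r)) * ((g1 b)^2 * Q) = g2 b * Q := by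
    rw [e1, e2]; unfold g1 g2
    rw [← hEdef]
    have h1 : (1:ℝ) + E^2 ≠ 0 := by positivity
    field_simp
    ring
  have idB : 4 * (1 + 2 * (2 * ((1:ℝ)/r)^2 - 1)) * ((1:ℝ)/r / (E/r))
      = g1 b * (2 * (3 - E^2) * (E^2)⁻¹) := by
    rw [e3, e1]; unfold g1
    rw [← hEdef]
    have h1 : (1:ℝ) + E^2 ≠ 0 := by positivity
    field_simp
    ring
  rw [idA, idB]
  have hg1 : g1 b ≠ 0 := by
    unfold g1; rw [← hEdef]; positivity
  constructor
  · intro h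
    exact mul_left_cancel₀ hg1 (by linarith)
  · intro h
    rw [h]

lemma pdu_def (f : ℝ × ℝ → ℝ) : pdu f = fun x => fderiv ℝ f x (1, 0) := rfl
lemma pdv_def (f : ℝ × ℝ → ℝ) : pdv f = fun x => fderiv ℝ f x (0, 1) := rfl

/-- with `Λ = arctan(e^{2β})` (taking values in `(0, π/2)`), the equation
`ΔΛ = (cot Λ − tan Λ)|∇Λ|² + 4(1 + 2cos 2Λ)cot Λ` on `U` is equivalent to
`Δβ = 2(3 − e^{4β})e^{−4β}` on `U`. -/
theorem stmt19 (U : Set (ℝ × ℝ)) (hU : IsOpen U)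
    (β : ℝ × ℝ → ℝ) (hβ : ContDiffOn ℝ (⊤ : ℕ∞) β U)
    (Λ : ℝ × ℝ → ℝ) (hΛ : Λ = fun x => Real.arctan (Real.exp (2 * β x))) :
    (∀ x ∈ U, pdu (pdu Λ) x + pdv (pdv Λ) x =
        (Real.cos (Λ x) / Real.sin (Λ x) - Real.sin (Λ x) / Real.cos (Λ x))
            * ((pdu Λ x) ^ 2 + (pdv Λ x) ^ 2)
          + 4 * (1 + 2 * Real.cos (2 * Λ x)) * (Real.cos (Λ x) / Real.sin (Λ x)))
      ↔
    (∀ x ∈ U, pdu (pdu β) x + pdv (pdv β) x =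
        2 * (3 - Real.exp (4 * β x)) * Real.exp (-(4 * β x))) := by
  subst hΛ
  apply forall₂_congr
  intro x hx
  have hβat : DifferentiableAt ℝ β x :=
    ((hβ.differentiableOn (by simp)) x hx).differentiableAt (hU.mem_nhds hx)
  simp only [pdu_def, pdv_def]
  rw [key hU hβ hx (1, 0), key hU hβ hx (0, 1),
    Dcomp ((1:ℝ), (0:ℝ)) (hasDerivAt_G (β x)) hβat,
    Dcomp ((0:ℝ), (1:ℝ)) (hasDerivAt_G (β x)) hβat]
  have halg := alg (β x) ((fderiv ℝ β x (1, 0))^2 + (fderiv ℝ β x (0, 1))^2)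
    (fderiv ℝ (fun y => fderiv ℝ β y (1, 0)) x (1, 0)
      + fderiv ℝ (fun y => fderiv ℝ β y (0, 1)) x (0, 1))
  constructor
  · intro h
    exact halg.mp (by linear_combination h)
  · intro h
    have := halg.mpr h
    linear_combination this
end
end
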